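/- arXiv:2404.08841 — 2 statements merged into one kernel-verified Lean document; each statement's English description precedes it below -/
import Mathlib

section
/- Let V be a strongly irregular variety of a plural type τ and let S_τ be the variety of type τ equivalent to the variety of semilattices. Then the Mal'tsev product V ∘ S_τ is a variety. -/
structure Signature where
  symbols : Type
  arity : symbols → ℕ

structure Alg (S : Signature) where
  carrier : Type
  op : ∀ ω : S.symbols, (Fin (S.arity ω) → carrier) → carrier
  nonempty : Nonempty carrier

inductive Term (S : Signature) (X : Type) : Type
  | var : X → Term S X
  | app : ∀ ω : S.symbols, (Fin (S.arity ω) → Term S X) → Term S X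

def Term.eval {S : Signature} {X : Type} (A : Alg S) (env : X → A.carrier) :
    Term S X → A.carrier
  | .var x => env x
  | .app ω ts => A.op ω fun i => (ts i).eval A env

/-- The algebra `A` satisfies the identity `u = v`. -/
def Alg.sat {S : Signature} (A : Alg S) {X : Type} (u v : Term S X) : Prop :=
  ∀ env : X → A.carrier, u.eval A env = v.eval A env

/-- An identity: a pair of terms in the countably many variables `x₀, x₁, …`. -/
abbrev Ident (S : Signature) := Term S ℕ × Term S ℕ

/-- `A` lies in the variety axiomatized by the set of identities `E`. -/
def Alg.Models {S : Signature} (A : Alg S) (E : Set (Ident S)) : Prop :=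
  ∀ e ∈ E, A.sat e.1 e.2

/-- The identity `u = v` holds in the variety axiomatized by `E`. -/
def Conseq {S : Signature} (E : Set (Ident S)) {X : Type} (u v : Term S X) : Prop :=
  ∀ A : Alg S, A.Models E → A.sat u v

/-- `a` is an idempotent element of `A`. -/
def Alg.IsIdem {S : Signature} (A : Alg S) (a : A.carrier) : Prop :=
  ∀ ω : S.symbols, A.op ω (fun _ => a) = a

/-- `B` is (the universe of) a subalgebra of `A`. -/
def Alg.IsSubuniverse {S : Signature} (A : Alg S) (B : Set A.carrier) : Prop :=
  ∀ ω (a : Fin (S.arity ω) → A.carrier), (∀ i, a i ∈ B) → A.op ω a ∈ B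

/-- The subalgebra of `A` on a nonempty subuniverse `B`. -/
def Alg.subAlg {S : Signature} (A : Alg S) (B : Set A.carrier)
    (h : A.IsSubuniverse B) (hne : B.Nonempty) : Alg S where
  carrier := B
  op ω a := ⟨A.op ω fun i => (a i : A.carrier), h ω _ fun i => (a i).2⟩
  nonempty := hne.to_subtype

/-- A congruence of `A`: an equivalence relation compatible with all operations. -/
structure Congruence {S : Signature} (A : Alg S) where
  rel : A.carrier → A.carrier → Prop
  iseqv : Equivalence rel
  compat : ∀ ω (a b : Fin (S.arity ω) → A.carrier),
    (∀ i, rel (a i) (b i)) → rel (A.op ω a) (A.op ω b)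

def Congruence.setoid {S : Signature} {A : Alg S} (θ : Congruence A) :
    Setoid A.carrier := ⟨θ.rel, θ.iseqv⟩

/-- The quotient algebra `A/θ`. -/
noncomputable def Alg.quot {S : Signature} (A : Alg S) (θ : Congruence A) : Alg S where
  carrier := Quotient θ.setoid
  op ω q := Quotient.mk θ.setoid (A.op ω fun i => (q i).out)
  nonempty := A.nonempty.map (Quotient.mk θ.setoid)

/-- Membership in the Mal'tsev product of the varieties axiomatized by `V` and `W`:
`A` has a congruence `θ` with `A/θ` in (the variety of) `W` such that every
`θ`-class which is a subalgebra of `A` is an algebra in (the variety of) `V`. -/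
def InMaltsev {S : Signature} (V W : Set (Ident S)) (A : Alg S) : Prop :=
  ∃ θ : Congruence A, (A.quot θ).Models W ∧
    ∀ a : A.carrier, ∀ h : A.IsSubuniverse {b | θ.rel a b},
      (A.subAlg {b | θ.rel a b} h ⟨a, θ.iseqv.refl a⟩).Models V

/-- A class of algebras is a variety iff it is axiomatized by some set of identities. -/
def IsVarietyClass {S : Signature} (K : Alg S → Prop) : Prop :=
  ∃ E : Set (Ident S), ∀ A : Alg S, K A ↔ A.Models E

/-- The set of variables occurring in a term. -/
def Term.vars {S : Signature} {X : Type} : Term S X → Set X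
  | .var x => {x}
  | .app _ ts => ⋃ i, (ts i).vars

/-- An identity is regular if both sides contain exactly the same variables. -/
def Regular {S : Signature} (e : Ident S) : Prop := e.1.vars = e.2.vars

/-
The variety `V ∘ S_τ` is axiomatized by the identities `t(u, v) = u` for all regular pairs `u, v`,
together with the instances `σp = σq` of the identities `p = q` of `R` under substitutions `σ`
that give all variables of `p` images with one and the same set of variables.

If `A/θ ∈ S_τ`, then regular `u, v` always take `θ`-related values, the `θ`-classes are subalgebras
(every operation is idempotent modulo `θ`), and these classes lie in `V`; this yields both kinds
of identities. Conversely, in a model of them, `a θ b :↔ t(a, b) = a ∧ t(b, a) = b` is a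
congruence whose quotient satisfies all regular identities. On a `θ`-class the map `x ↦ t(x, p)`
is the identity, so the instance of `p = q` under `σ x = t(x, p)` is `p = q` itself there.
-/

namespace Term

variable {S : Signature} {X Y : Type}

def subst (σ : X → Term S Y) : Term S X → Term S Y
  | .var x => σ x
  | .app ω ts => .app ω fun i => (ts i).subst σ

theorem eval_subst (A : Alg S) (σ : X → Term S Y) (env : Y → A.carrier) (u : Term S X) :
    (u.subst σ).eval A env = u.eval A fun x => (σ x).eval A env := by
  induction u with
  | var x => rfl
  | app ω ts ih => simp only [subst, eval, ih]

theorem vars_subst (σ : X → Term S Y) (u : Term S X) :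
    (u.subst σ).vars = ⋃ x ∈ u.vars, (σ x).vars := by
  induction u with
  | var x => simp [subst, vars]
  | app ω ts ih => simp only [subst, vars, ih, Set.biUnion_iUnion]

theorem eval_eq_of_eqOn (A : Alg S) {e₁ e₂ : X → A.carrier} {u : Term S X}
    (h : Set.EqOn e₁ e₂ u.vars) : u.eval A e₁ = u.eval A e₂ := by
  induction u with
  | var x => exact h rfl
  | app ω ts ih =>
    simp only [eval]
    congr 1
    funext i
    exact ih i fun x hx => h (Set.mem_iUnion.2 ⟨i, hx⟩)

theorem vars_nonempty (h0 : ∀ ω : S.symbols, 0 < S.arity ω) (u : Term S X) :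
    u.vars.Nonempty := by
  induction u with
  | var x => exact ⟨x, rfl⟩
  | app ω ts ih =>
    obtain ⟨x, hx⟩ := ih ⟨0, h0 ω⟩
    exact ⟨x, Set.mem_iUnion.2 ⟨⟨0, h0 ω⟩, hx⟩⟩

def eval₂ (t : Term S (Fin 2)) (A : Alg S) (a b : A.carrier) : A.carrier :=
  t.eval A ![a, b]

theorem eval_subst_pair (t : Term S (Fin 2)) (A : Alg S) (u v : Term S Y)
    (env : Y → A.carrier) :
    (t.subst ![u, v]).eval A env = t.eval₂ A (u.eval A env) (v.eval A env) := by
  rw [eval_subst, eval₂]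
  congr 1
  funext i
  fin_cases i <;> rfl

theorem vars_subst_pair {t : Term S (Fin 2)} (ht : t.vars = Set.univ) (u v : Term S Y) :
    (t.subst ![u, v]).vars = u.vars ∪ v.vars := by
  ext y
  simp [vars_subst, ht, Fin.exists_fin_two]

end Term

section Subalgebras

variable {S : Signature} {X : Type}

theorem Alg.val_eval_subAlg (A : Alg S) {B : Set A.carrier} (h : A.IsSubuniverse B)
    (hne : B.Nonempty) (env : X → (A.subAlg B h hne).carrier) (u : Term S X) :
    (u.eval (A.subAlg B h hne) env).1 = u.eval A fun x => (env x).1 := by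
  induction u with
  | var x => rfl
  | app ω ts ih => exact congrArg (A.op ω) (funext ih)

theorem Alg.eval_eq_of_subAlg_sat {A : Alg S} {B : Set A.carrier} (h : A.IsSubuniverse B)
    (hne : B.Nonempty) {p q : Term S X} (hpq : (A.subAlg B h hne).sat p q)
    (env : X → A.carrier) (henv : ∀ x ∈ p.vars ∪ q.vars, env x ∈ B) :
    p.eval A env = q.eval A env := by
  classical
  let env' : X → B := fun x => if hx : env x ∈ B then ⟨env x, hx⟩ else ⟨hne.some, hne.some_mem⟩
  have hval : Set.EqOn env (fun x => (env' x).1) (p.vars ∪ q.vars) := fun x hx => by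
    simp only [env']
    rw [dif_pos (henv x hx)]
  calc p.eval A env = p.eval A fun x => (env' x).1 :=
        Term.eval_eq_of_eqOn A (hval.mono Set.subset_union_left)
    _ = q.eval A fun x => (env' x).1 :=
        (A.val_eval_subAlg h hne env' p).symm.trans
          ((congrArg Subtype.val (hpq env')).trans (A.val_eval_subAlg h hne env' q))
    _ = q.eval A env := Term.eval_eq_of_eqOn A (hval.mono Set.subset_union_right).symm

end Subalgebras

section Quotients

variable {S : Signature} {X : Type} {A : Alg S}

theorem Alg.eval_quot (θ : Congruence A) (env : X → Quotient θ.setoid) (u : Term S X) :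
    u.eval (A.quot θ) env = Quotient.mk θ.setoid (u.eval A fun x => (env x).out) := by
  induction u with
  | var x => exact (Quotient.out_eq _).symm
  | app ω ts ih =>
    refine Quotient.sound (θ.compat ω _ _ fun i => ?_)
    change θ.rel (Term.eval (A.quot θ) env (ts i)).out _
    rw [ih i]
    exact Quotient.mk_out (s := θ.setoid) _

theorem Congruence.rel_eval (θ : Congruence A) {e₁ e₂ : X → A.carrier}
    (h : ∀ x, θ.rel (e₁ x) (e₂ x)) (u : Term S X) : θ.rel (u.eval A e₁) (u.eval A e₂) := by
  induction u with
  | var x => exact h x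
  | app ω ts ih => exact θ.compat ω _ _ ih

theorem Congruence.rel_eval_of_quot_sat (θ : Congruence A) {u v : Term S X}
    (h : (A.quot θ).sat u v) (env : X → A.carrier) :
    θ.rel (u.eval A env) (v.eval A env) := by
  have hout : ∀ x, θ.rel (Quotient.mk θ.setoid (env x)).out (env x) := fun x =>
    Quotient.mk_out (s := θ.setoid) _
  have hquot := h fun x => Quotient.mk θ.setoid (env x)
  rw [A.eval_quot, A.eval_quot] at hquot
  exact θ.iseqv.trans (θ.iseqv.trans (θ.iseqv.symm (θ.rel_eval hout u))
    (Quotient.exact hquot)) (θ.rel_eval hout v)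

end Quotients

section MaltsevProduct

variable {S : Signature} {A : Alg S} {t : Term S (Fin 2)}

def absorptionIdents (t : Term S (Fin 2)) : Set (Ident S) :=
  {e | ∃ u v : Term S ℕ, u.vars = v.vars ∧ e = (t.subst ![u, v], u)}

def uniformInstances (R : Set (Ident S)) : Set (Ident S) :=
  {e | ∃ (p q : Term S ℕ) (σ : ℕ → Term S ℕ), (p, q) ∈ R ∧
    (∀ m ∈ p.vars, ∀ n ∈ p.vars, (σ m).vars = (σ n).vars) ∧ e = (p.subst σ, q.subst σ)}

theorem Congruence.isSubuniverse_class (h0 : ∀ ω : S.symbols, 0 < S.arity ω)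
    {θ : Congruence A} (hθ : (A.quot θ).Models {e | Regular e}) (a : A.carrier) :
    A.IsSubuniverse {b | θ.rel a b} := by
  intro ω bs hbs
  have : Nonempty (Fin (S.arity ω)) := ⟨⟨0, h0 ω⟩⟩
  have hidem : θ.rel (A.op ω fun _ => a) a :=
    θ.rel_eval_of_quot_sat (u := .app ω fun _ => .var 0) (v := .var 0)
      (hθ (_, _) (Set.iUnion_const _)) fun _ => a
  exact θ.iseqv.symm (θ.iseqv.trans (θ.compat ω _ _ fun i => θ.iseqv.symm (hbs i)) hidem)

theorem models_of_inMaltsev (h0 : ∀ ω : S.symbols, 0 < S.arity ω) {V R : Set (Ident S)}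
    (hR : ∀ e ∈ R, Regular e)
    (hV : ∀ A : Alg S, A.Models V ↔ (A.Models R ∧ A.sat t (Term.var 0)))
    (hA : InMaltsev V {e | Regular e} A) :
    A.Models (absorptionIdents t ∪ uniformInstances R) := by
  obtain ⟨θ, hθ, hV_class⟩ := hA
  have hsub := θ.isSubuniverse_class h0 hθ
  have hclass a := (hV _).1 (hV_class a (hsub a))
  rintro e (⟨u, v, huv, rfl⟩ | ⟨p, q, σ, hpq, hσ, rfl⟩) env
  · change (t.subst ![u, v]).eval A env = u.eval A env
    rw [Term.eval_subst_pair]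
    have hab := θ.rel_eval_of_quot_sat (hθ (u, v) huv) env
    refine Alg.eval_eq_of_subAlg_sat _ _ (hclass (u.eval A env)).2 _ fun i _ => ?_
    fin_cases i
    exacts [θ.iseqv.refl _, hab]
  · change (p.subst σ).eval A env = (q.subst σ).eval A env
    rw [Term.eval_subst, Term.eval_subst]
    obtain ⟨n₀, hn₀⟩ := p.vars_nonempty h0
    refine Alg.eval_eq_of_subAlg_sat _ _ ((hclass ((σ n₀).eval A env)).1 _ hpq) _ fun n hn => ?_
    rw [← hR _ hpq, Set.union_self] at hn
    exact θ.rel_eval_of_quot_sat (hθ (σ n₀, σ n) (hσ n₀ hn₀ n hn)) env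

section Absorption

variable (hA : A.Models (absorptionIdents t))
include hA

theorem eval₂_absorb {X : Type} [Countable X] {u v : Term S X} (huv : u.vars = v.vars)
    (env : X → A.carrier) : t.eval₂ A (u.eval A env) (v.eval A env) = u.eval A env := by
  obtain ⟨f, hf⟩ := Countable.exists_injective_nat X
  let env' : ℕ → A.carrier := Function.extend f env fun _ => A.nonempty.some
  have hrename (w : Term S X) : (w.subst fun x => .var (f x)).eval A env' = w.eval A env := by
    rw [Term.eval_subst]
    congr 1
    funext x
    show env' (f x) = env x
    exact hf.extend_apply env _ x
  have h := hA _ ⟨u.subst fun x => .var (f x), v.subst fun x => .var (f x),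
    by rw [Term.vars_subst, Term.vars_subst, huv], rfl⟩ env'
  rwa [Term.eval_subst_pair, hrename, hrename] at h

theorem eval₂_self (a : A.carrier) : t.eval₂ A a a = a :=
  eval₂_absorb hA (u := (.var () : Term S Unit)) rfl fun _ => a

theorem eval₂_trans (ht : t.vars = Set.univ) {a b c : A.carrier} (hab : t.eval₂ A a b = a)
    (hba : t.eval₂ A b a = b) (hbc : t.eval₂ A b c = b) (hcb : t.eval₂ A c b = c) :
    t.eval₂ A a c = a := by
  let x : Fin 3 → Term S (Fin 3) := Term.var
  have hvars : (t.subst ![x 0, t.subst ![x 1, x 2]]).vars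
      = (t.subst ![x 2, t.subst ![x 1, x 0]]).vars := by
    simp only [Term.vars_subst_pair ht, x, Term.vars]
    ext
    simp only [Set.mem_union, Set.mem_singleton_iff]
    tauto
  -- at `(a, b, c)` the two sides take the values `a` and `c`
  have h := eval₂_absorb hA hvars ![a, b, c]
  simp only [Term.eval_subst_pair, x, Term.eval, Matrix.cons_val] at h
  rwa [hbc, hab, hba, hcb] at h

theorem eval₂_op (ht : t.vars = Set.univ) (ω : S.symbols) {as bs : Fin (S.arity ω) → A.carrier}
    (h : ∀ i, t.eval₂ A (as i) (bs i) = as i ∧ t.eval₂ A (bs i) (as i) = bs i) :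
    t.eval₂ A (A.op ω as) (A.op ω bs) = A.op ω as := by
  let u : Term S (Fin (S.arity ω) ⊕ Fin (S.arity ω)) :=
    .app ω fun i => t.subst ![.var (.inl i), .var (.inr i)]
  let v : Term S (Fin (S.arity ω) ⊕ Fin (S.arity ω)) :=
    .app ω fun i => t.subst ![.var (.inr i), .var (.inl i)]
  have huv : u.vars = v.vars := by
    simp only [u, v, Term.vars, Term.vars_subst_pair ht, Set.union_comm]
  have hu : u.eval A (Sum.elim as bs) = A.op ω as := by
    simp only [u, Term.eval, Term.eval_subst_pair, Sum.elim_inl, Sum.elim_inr, (h _).1]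
  have hv : v.eval A (Sum.elim as bs) = A.op ω bs := by
    simp only [v, Term.eval, Term.eval_subst_pair, Sum.elim_inl, Sum.elim_inr, (h _).2]
  rw [← hu, ← hv]
  exact eval₂_absorb hA huv _

def absorptionCongruence (ht : t.vars = Set.univ) : Congruence A where
  rel a b := t.eval₂ A a b = a ∧ t.eval₂ A b a = b
  iseqv :=
    { refl a := ⟨eval₂_self hA a, eval₂_self hA a⟩
      symm h := ⟨h.2, h.1⟩
      trans h₁ h₂ := ⟨eval₂_trans hA ht h₁.1 h₁.2 h₂.1 h₂.2, eval₂_trans hA ht h₂.2 h₂.1 h₁.2 h₁.1⟩ }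
  compat ω _ _ h := ⟨eval₂_op hA ht ω h, eval₂_op hA ht ω fun i => (h i).symm⟩

theorem quot_absorptionCongruence_models (ht : t.vars = Set.univ) :
    (A.quot (absorptionCongruence hA ht)).Models {e | Regular e} := by
  intro ⟨u, v⟩ (huv : u.vars = v.vars) env
  have hrel : (absorptionCongruence hA ht).rel (u.eval A fun x => (env x).out)
      (v.eval A fun x => (env x).out) :=
    ⟨eval₂_absorb hA huv _, eval₂_absorb hA huv.symm _⟩
  exact (A.eval_quot _ env u).trans <|
    (Quotient.sound hrel).trans (A.eval_quot _ env v).symm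

theorem subAlg_absorptionCongruence_class_models (ht : t.vars = Set.univ) {V R : Set (Ident S)}
    (hV : ∀ A : Alg S, A.Models V ↔ (A.Models R ∧ A.sat t (Term.var 0)))
    (hinst : A.Models (uniformInstances R)) (a : A.carrier)
    (hsub : A.IsSubuniverse {b | (absorptionCongruence hA ht).rel a b}) :
    (A.subAlg _ hsub ⟨a, (absorptionCongruence hA ht).iseqv.refl a⟩).Models V := by
  have hrel (x y : (A.subAlg _ hsub ⟨a, (absorptionCongruence hA ht).iseqv.refl a⟩).carrier) :
      t.eval₂ A x.1 y.1 = x.1 :=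
    ((absorptionCongruence hA ht).iseqv.trans ((absorptionCongruence hA ht).iseqv.symm x.2) y.2).1
  rw [hV]
  refine ⟨fun ⟨p, q⟩ hpq env => Subtype.ext ?_, fun env => Subtype.ext ?_⟩
  · have hp := A.val_eval_subAlg hsub _ env p
    let σ : ℕ → Term S ℕ := fun x => t.subst ![.var x, p]
    have hσ : ∀ m ∈ p.vars, ∀ n ∈ p.vars, (σ m).vars = (σ n).vars := by
      intro m hm n hn
      simp only [σ, Term.vars_subst_pair ht, Term.vars, Set.singleton_union,
        Set.insert_eq_of_mem hm, Set.insert_eq_of_mem hn]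
    have hfix (x : ℕ) : (σ x).eval A (fun n => (env n).1) = (env x).1 := by
      rw [Term.eval_subst_pair, ← hp]
      exact hrel (env x) (p.eval _ env)
    have hpq' : p.eval A (fun n => (env n).1) = q.eval A (fun n => (env n).1) := by
      simpa only [Term.eval_subst, hfix] using hinst _ ⟨p, q, σ, hpq, hσ, rfl⟩ fun n => (env n).1
    exact hp.trans (hpq'.trans (A.val_eval_subAlg hsub _ env q).symm)
  · have henv : (fun x => (env x).1) = ![(env 0).1, (env 1).1] := by
      funext i
      fin_cases i <;> rfl
    refine (A.val_eval_subAlg hsub _ env t).trans ?_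
    rw [henv]
    exact hrel (env 0) (env 1)

end Absorption

theorem inMaltsev_of_models (ht : t.vars = Set.univ) {V R : Set (Ident S)}
    (hV : ∀ A : Alg S, A.Models V ↔ (A.Models R ∧ A.sat t (Term.var 0)))
    (hA : A.Models (absorptionIdents t ∪ uniformInstances R)) :
    InMaltsev V {e | Regular e} A :=
  have hA' : A.Models (absorptionIdents t) := fun e he => hA e (Or.inl he)
  ⟨absorptionCongruence hA' ht, quot_absorptionCongruence_models hA' ht,
    subAlg_absorptionCongruence_class_models hA' ht hV fun e he => hA e (Or.inr he)⟩

end MaltsevProduct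

theorem stmt_13_general (S : Signature) (h0 : ∀ ω : S.symbols, 0 < S.arity ω)
    (V : Set (Ident S)) (R : Set (Ident S))
    (hR : ∀ e ∈ R, Regular e)
    (t : Term S (Fin 2)) (ht : t.vars = Set.univ)
    (hV : ∀ A : Alg S, A.Models V ↔ (A.Models R ∧ A.sat t (Term.var 0))) :
    IsVarietyClass (InMaltsev V {e : Ident S | Regular e}) :=
  ⟨absorptionIdents t ∪ uniformInstances R, fun _ =>
    ⟨models_of_inMaltsev h0 hR hV, inMaltsev_of_models ht hV⟩⟩

/-- Let `V` be a strongly irregular variety of a plural type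
`τ` (defined by a set `R` of regular identities together with a strongly
irregular identity `t(x,y) = x`, where `t` contains both variables), and let
`S_τ` be the variety of type `τ` equivalent to the variety of semilattices (the
class of algebras satisfying exactly the regular identities of type `τ`). Then
the Mal'tsev product `V ∘ S_τ` is a variety. -/
theorem stmt_13 (S : Signature) (h0 : ∀ ω : S.symbols, 0 < S.arity ω)
    (hplural : ∃ ω : S.symbols, 2 ≤ S.arity ω)
    (V : Set (Ident S)) (R : Set (Ident S))
    (hR : ∀ e ∈ R, Regular e)
    (t : Term S (Fin 2)) (ht : t.vars = Set.univ)
    (hV : ∀ A : Alg S, A.Models V ↔ (A.Models R ∧ A.sat t (Term.var 0))) :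
    IsVarietyClass (InMaltsev V {e : Ident S | Regular e}) :=
  stmt_13_general S h0 V R hR t ht hV
end

section
/- Let V and W be subvarieties of a variety U of Ω-algebras, with W idempotent. If the intersection V ∩ W is the trivial variety and U is congruence 3-permutable, then the Mal'tsev product V ∘ W is a variety. -/
/-- Relational composition: `a (r ∘ s) c` iff `a r b s c` for some `b`. -/
def RelComp {α : Type} (r s : α → α → Prop) : α → α → Prop :=
  fun a c => ∃ b, r a b ∧ s b c

/-- Two relations `3`-permute if `r ∘ s ∘ r = s ∘ r ∘ s`. -/
def ThreePerm {α : Type} (r s : α → α → Prop) : Prop :=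
  RelComp (RelComp r s) r = RelComp (RelComp s r) s


/-!
`V ∘ W` is axiomatized by the identities `t(σ₀, σ₁, …) ≈ s(σ₀, σ₁, …)` with `V ⊨ t ≈ s` and
terms `σᵢ` pairwise equal in `W`: in `A ∈ V ∘ W` the values of the `σᵢ` lie in one class of
`θ`, which is a subalgebra because `A/θ` is idempotent, hence satisfies `t ≈ s`.

Conversely, as `V ∩ W` is trivial, `x₀` and `x₁` are joined by a chain of `V`- and
`W`-consequences; 3-permutability of the free algebra of `U` shortens it to switch terms with
`V ⊨ x₀ ≈ u(x₀, x₁)`, `W ⊨ u ≈ v`, `V ⊨ v(x₀, x₁) ≈ x₁`. In a model `A` of the identities above,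
let `θ` be generated by the pairs `(p(ā), q(ā))` with `W ⊨ p ≈ q`. If `d` is a tuple of values
of pairwise `W`-equal terms and `dₖ θ y` in one step, then so is `d` with `y` in place of any
entry: the new tuple is `(u(dᵢ, dₖ))ᵢ` with `v(dₖ, y)` in that place, and the switch identities
give `u(dᵢ, dₖ) = dᵢ` and `v(dₖ, y) = y`. So finitely many elements of a `θ`-class are values of
pairwise `W`-equal terms, and every `θ`-class satisfies `V`.
-/

open Function Relation

theorem Relation.reflTransGen_pi_of_forall_update {ι α : Type} [Fintype ι] [DecidableEq ι]
    {r : α → α → Prop} {R : (ι → α) → (ι → α) → Prop}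
    (h : ∀ f j x y, r x y → R (update f j x) (update f j y)) {a b : ι → α}
    (hab : ∀ i, ReflTransGen r (a i) (b i)) : ReflTransGen R a b := by
  suffices ∀ s : Finset ι, ReflTransGen R a fun i => if i ∈ s then b i else a i by
    simpa using this Finset.univ
  intro s
  induction s using Finset.induction with
  | empty => simpa using ReflTransGen.refl
  | @insert j s hj ih =>
    set g : ι → α := fun i => if i ∈ s then b i else a i
    have hgj : g j = a j := if_neg hj
    have hnext : (fun i => if i ∈ insert j s then b i else a i) = update g j (b j) := by
      funext i
      rcases eq_or_ne i j with rfl | hij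
      · simp
      · simp [g, hij]
    rw [hnext]
    refine ih.trans ?_
    have hstep : ReflTransGen R (update g j (a j)) (update g j (b j)) :=
      ReflTransGen.lift (update g j) (fun x y => h g j x y) _ _ (hab j)
    rwa [← hgj, update_eq_self] at hstep

namespace Term

variable {S : Signature}

def bind {X Y : Type} : Term S X → (X → Term S Y) → Term S Y
  | var x, σ => σ x
  | app ω ts, σ => app ω fun i => (ts i).bind σ

theorem eval_bind {X Y : Type} (A : Alg S) (σ : X → Term S Y) (env : Y → A.carrier) :
    ∀ t : Term S X, (t.bind σ).eval A env = t.eval A fun x => (σ x).eval A env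
  | var _ => rfl
  | app ω ts => congrArg (A.op ω) (funext fun i => eval_bind A σ env (ts i))

theorem eval_bind_var (A : Alg S) (ρ : ℕ → ℕ) (env : ℕ → A.carrier) (t : Term S ℕ) :
    (t.bind fun n => var (ρ n)).eval A env = t.eval A (env ∘ ρ) :=
  eval_bind A _ env t

def varBound : Term S ℕ → ℕ
  | var x => x + 1
  | app _ ts => Finset.univ.sup fun i => (ts i).varBound

theorem eval_congr (A : Alg S) {e e' : ℕ → A.carrier} :
    ∀ t : Term S ℕ, (∀ n < t.varBound, e n = e' n) → t.eval A e = t.eval A e'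
  | var x, h => h x x.lt_succ_self
  | app ω ts, h => congrArg (A.op ω) <| funext fun i => eval_congr A (ts i) fun n hn =>
      h n (hn.trans_le (Finset.le_sup (f := fun j => (ts j).varBound) (Finset.mem_univ i)))

end Term

namespace Conseq

variable {S : Signature} {E : Set (Ident S)} {X : Type}

protected theorem refl (E : Set (Ident S)) (t : Term S X) : Conseq E t t :=
  fun _ _ _ => rfl

protected theorem symm {t s : Term S X} (h : Conseq E t s) : Conseq E s t :=
  fun A hA env => (h A hA env).symm

protected theorem trans {t s r : Term S X} (h₁ : Conseq E t s) (h₂ : Conseq E s r) :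
    Conseq E t r :=
  fun A hA env => (h₁ A hA env).trans (h₂ A hA env)

theorem equivalence (E : Set (Ident S)) : Equivalence (Conseq E (X := X)) :=
  ⟨Conseq.refl E, Conseq.symm, Conseq.trans⟩

theorem of_mem {e : Ident S} (he : e ∈ E) : Conseq E e.1 e.2 :=
  fun _ hA => hA e he

theorem mono {E' : Set (Ident S)} (h : ∀ A : Alg S, A.Models E' → A.Models E)
    {t s : Term S X} (hts : Conseq E t s) : Conseq E' t s :=
  fun A hA => hts A (h A hA)

theorem app {ω : S.symbols} {ts ts' : Fin (S.arity ω) → Term S X}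
    (h : ∀ i, Conseq E (ts i) (ts' i)) : Conseq E (.app ω ts) (.app ω ts') :=
  fun A hA env => congrArg (A.op ω) (funext fun i => h i A hA env)

theorem app_update {ω : S.symbols} (ts : Fin (S.arity ω) → Term S X) (j : Fin (S.arity ω))
    {t s : Term S X} (h : Conseq E t s) :
    Conseq E (.app ω (update ts j t)) (.app ω (update ts j s)) :=
  app fun i => by
    rcases eq_or_ne i j with rfl | hij
    · simpa only [update_self] using h
    · simpa only [update_of_ne hij] using Conseq.refl E (ts i)

theorem bind {Y : Type} {t s : Term S X} {σ σ' : X → Term S Y} (hts : Conseq E t s)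
    (hσ : ∀ x, Conseq E (σ x) (σ' x)) : Conseq E (t.bind σ) (s.bind σ') := by
  intro A hA env
  simp only [Term.eval_bind, funext fun x => hσ x A hA env]
  exact hts A hA _

end Conseq

namespace Congruence

variable {S : Signature} {A : Alg S} (θ : Congruence A)

theorem rel_out_mk (a : A.carrier) : θ.rel (Quotient.mk θ.setoid a).out a :=
  Quotient.exact (s := θ.setoid) (Quotient.out_eq _)

theorem quot_op_mk {ω : S.symbols} (a : Fin (S.arity ω) → A.carrier) :
    (A.quot θ).op ω (fun i => Quotient.mk θ.setoid (a i)) = Quotient.mk θ.setoid (A.op ω a) :=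
  Quotient.sound (θ.compat ω _ _ fun i => θ.rel_out_mk (a i))

theorem eval_quot (env : ℕ → A.carrier) :
    ∀ t : Term S ℕ, t.eval (A.quot θ) (fun n => Quotient.mk θ.setoid (env n)) =
      Quotient.mk θ.setoid (t.eval A env)
  | .var _ => rfl
  | .app ω ts => by
    simp only [Term.eval, eval_quot env]
    exact θ.quot_op_mk _

theorem models_quot_of {E : Set (Ident S)}
    (h : ∀ e ∈ E, ∀ env : ℕ → A.carrier, θ.rel (e.1.eval A env) (e.2.eval A env)) :
    (A.quot θ).Models E := by
  intro e he env
  rw [show env = fun n => Quotient.mk θ.setoid (env n).out from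
    funext fun n => (Quotient.out_eq _).symm, θ.eval_quot, θ.eval_quot]
  exact Quotient.sound (h e he _)

theorem rel_eval_of_conseq {W : Set (Ident S)} (hθ : (A.quot θ).Models W) {p q : Term S ℕ}
    (hpq : Conseq W p q) (env : ℕ → A.carrier) : θ.rel (p.eval A env) (q.eval A env) := by
  have := hpq _ hθ fun n => Quotient.mk θ.setoid (env n)
  rw [θ.eval_quot, θ.eval_quot] at this
  exact Quotient.exact this

theorem isSubuniverse_class_s15 {a : A.carrier} (ha : (A.quot θ).IsIdem (Quotient.mk θ.setoid a)) :
    A.IsSubuniverse {b | θ.rel a b} := by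
  intro ω c hc
  have : Quotient.mk θ.setoid (A.op ω c) = Quotient.mk θ.setoid a := by
    rw [← θ.quot_op_mk, ← ha ω]
    exact congrArg _ (funext fun i => Quotient.sound (θ.iseqv.symm (hc i)))
  exact θ.iseqv.symm (Quotient.exact this)

def ofReflTransGen (r : A.carrier → A.carrier → Prop) (hr : ∀ a b, r a b → r b a)
    (hcompat : ∀ ω (a : Fin (S.arity ω) → A.carrier) j x y,
      r x y → r (A.op ω (update a j x)) (A.op ω (update a j y))) :
    Congruence A where
  rel := ReflTransGen r
  iseqv := ⟨fun _ => .refl, fun h => haveI : Std.Symm r := ⟨hr⟩; Std.Symm.symm _ _ h, .trans⟩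
  compat ω _ _ h := ReflTransGen.lift (A.op ω) (fun _ _ => id) _ _
    (reflTransGen_pi_of_forall_update (R := fun f g => r (A.op ω f) (A.op ω g)) (hcompat ω) h)

end Congruence

namespace Alg

variable {S : Signature}

theorem subAlg_eval (A : Alg S) {B : Set A.carrier} (h : A.IsSubuniverse B)
    (hne : B.Nonempty) (env : ℕ → (A.subAlg B h hne).carrier) :
    ∀ t : Term S ℕ, (t.eval (A.subAlg B h hne) env).1 = t.eval A fun n => (env n).1
  | .var _ => rfl
  | .app ω ts => congrArg (A.op ω) (funext fun i => subAlg_eval A h hne env (ts i))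

theorem eval_eq_of_subAlg_models {A : Alg S} {B : Set A.carrier} {h : A.IsSubuniverse B}
    {hne : B.Nonempty} {E : Set (Ident S)} (hB : (A.subAlg B h hne).Models E)
    {t s : Term S ℕ} (hts : Conseq E t s) {c : ℕ → A.carrier} (hc : ∀ n, c n ∈ B) :
    t.eval A c = s.eval A c := by
  have hval := subAlg_eval A h hne fun n => ⟨c n, hc n⟩
  rw [← hval t, ← hval s]
  exact congrArg Subtype.val (hts _ hB _)

theorem exists_env_comp_eq (A : Alg S) {ι : Type} [Countable ι] (e : ι → ℕ → A.carrier) :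
    ∃ (ρ : ι → ℕ → ℕ) (env : ℕ → A.carrier), ∀ i, env ∘ ρ i = e i := by
  obtain ⟨g, hg⟩ := Countable.exists_injective_nat (ι × ℕ)
  exact ⟨fun i n => g (i, n), extend g (fun p => e p.1 p.2) fun _ => A.nonempty.some,
    fun i => funext fun n => hg.extend_apply _ _ (i, n)⟩

end Alg

section FreeAlgebra

variable {S : Signature}

def TermAlg (S : Signature) : Alg S :=
  ⟨Term S ℕ, Term.app, ⟨Term.var 0⟩⟩

theorem eval_termAlg (σ : ℕ → (TermAlg S).carrier) :
    ∀ t : Term S ℕ, t.eval (TermAlg S) σ = t.bind σ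
  | .var _ => rfl
  | .app ω ts => congrArg (Term.app ω) (funext fun i => eval_termAlg σ (ts i))

theorem models_termAlg_quot {E : Set (Ident S)} (θ : Congruence (TermAlg S))
    (h : ∀ t s : Term S ℕ, Conseq E t s → θ.rel t s) : ((TermAlg S).quot θ).Models E :=
  θ.models_quot_of fun e he env => by
    rw [eval_termAlg, eval_termAlg]
    exact h _ _ ((Conseq.of_mem he).bind fun n => Conseq.refl E (env n))

def TermAlg.conseqCong (E : Set (Ident S)) : Congruence (TermAlg S) where
  rel := Conseq E
  iseqv := Conseq.equivalence E
  compat _ _ _ := Conseq.app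

noncomputable abbrev FreeAlg (E : Set (Ident S)) : Alg S :=
  (TermAlg S).quot (TermAlg.conseqCong E)

noncomputable def FreeAlg.conseqCong {U : Set (Ident S)} (E : Set (Ident S))
    (hEU : ∀ A : Alg S, A.Models E → A.Models U) : Congruence (FreeAlg U) where
  rel q r := Conseq E q.out r.out
  iseqv := ⟨fun _ => .refl E _, Conseq.symm, Conseq.trans⟩
  compat ω a b hab := by
    have hout (t : Term S ℕ) := ((TermAlg.conseqCong U).rel_out_mk t).mono hEU
    exact (hout _).trans ((Conseq.app hab).trans (hout _).symm)

theorem FreeAlg.conseqCong_rel_onFun_mk {U E : Set (Ident S)}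
    (hEU : ∀ A : Alg S, A.Models E → A.Models U) :
    ((FreeAlg.conseqCong E hEU).rel on Quotient.mk (TermAlg.conseqCong U).setoid) = Conseq E := by
  have hout (t : Term S ℕ) := ((TermAlg.conseqCong U).rel_out_mk t).mono hEU
  funext t s
  exact propext ⟨fun h => (hout t).symm.trans (h.trans (hout s)),
    fun h => (hout t).trans (h.trans (hout s).symm)⟩

end FreeAlgebra

section SwitchTerms

theorem relComp_onFun {α β : Type} {f : β → α} (hf : Surjective f) (r s : α → α → Prop) :
    RelComp (r on f) (s on f) = (RelComp r s on f) := by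
  funext a c
  refine propext ⟨fun ⟨b, hab, hbc⟩ => ⟨f b, hab, hbc⟩, fun ⟨y, hay, hyc⟩ => ?_⟩
  obtain ⟨b, rfl⟩ := hf y
  exact ⟨b, hay, hyc⟩

theorem ThreePerm.onFun {α β : Type} {f : β → α} (hf : Surjective f) {r s : α → α → Prop}
    (h : ThreePerm r s) : ThreePerm (r on f) (s on f) := by
  rw [ThreePerm] at h ⊢
  simp only [relComp_onFun hf, h]

theorem ThreePerm.relComp_of_reflTransGen {α : Type} {r s : α → α → Prop} (hr : Equivalence r)
    (hs : Equivalence s) (h : ThreePerm r s) {a b : α}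
    (hab : ReflTransGen (fun x y => r x y ∨ s x y) a b) : RelComp (RelComp r s) r a b := by
  induction hab with
  | refl => exact ⟨a, ⟨a, hr.refl a, hs.refl a⟩, hr.refl a⟩
  | @tail c d _ hcd ih =>
    obtain ⟨m₂, hm₂, hm₂c⟩ := ih
    rcases hcd with hcd | hcd
    · exact ⟨m₂, hm₂, hr.trans hm₂c hcd⟩
    obtain ⟨m₁, ham₁, hm₁m₂⟩ := hm₂
    have hm₂d : RelComp (RelComp s r) s m₂ d := by
      rw [← h]
      exact ⟨d, ⟨c, hm₂c, hcd⟩, hr.refl d⟩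
    obtain ⟨n₂, ⟨n₁, hm₂n₁, hn₁n₂⟩, hn₂d⟩ := hm₂d
    have han₂ : RelComp (RelComp s r) s a n₂ := by
      rw [← h]
      exact ⟨n₁, ⟨m₁, ham₁, hs.trans hm₁m₂ hm₂n₁⟩, hn₁n₂⟩
    obtain ⟨k, hak, hkn₂⟩ := han₂
    rw [h]
    exact ⟨k, hak, hs.trans hkn₂ hn₂d⟩

variable {S : Signature}

theorem reflTransGen_conseq_var_zero_one {V W : Set (Ident S)}
    (htriv : ∀ A : Alg S, A.Models V → A.Models W → Subsingleton A.carrier) :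
    ReflTransGen (fun t s : Term S ℕ => Conseq V t s ∨ Conseq W t s) (.var 0) (.var 1) := by
  let θ := Congruence.ofReflTransGen (A := TermAlg S)
    (fun t s : Term S ℕ => Conseq V t s ∨ Conseq W t s)
    (fun _ _ h => h.imp Conseq.symm Conseq.symm)
    fun _ a j _ _ h => h.imp (Conseq.app_update a j) (Conseq.app_update a j)
  have := htriv _ (models_termAlg_quot θ fun _ _ h => .single (.inl h))
    (models_termAlg_quot θ fun _ _ h => .single (.inr h))
  exact Quotient.exact (s := θ.setoid) (this.elim _ _)

theorem threePerm_conseq {U V W : Set (Ident S)}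
    (hVU : ∀ A : Alg S, A.Models V → A.Models U) (hWU : ∀ A : Alg S, A.Models W → A.Models U)
    (h3perm : ∀ α β : Congruence (FreeAlg U), ThreePerm α.rel β.rel) :
    ThreePerm (Conseq V (X := ℕ)) (Conseq W) := by
  rw [← FreeAlg.conseqCong_rel_onFun_mk hVU, ← FreeAlg.conseqCong_rel_onFun_mk hWU]
  exact (h3perm _ _).onFun Quotient.mk_surjective

structure IsSwitchPair (V W : Set (Ident S)) (u v : Term S ℕ) : Prop where
  left : Conseq V (.var 0) u
  mid : Conseq W u v
  right : Conseq V v (.var 1)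

theorem exists_isSwitchPair {U V W : Set (Ident S)}
    (hVU : ∀ A : Alg S, A.Models V → A.Models U) (hWU : ∀ A : Alg S, A.Models W → A.Models U)
    (htriv : ∀ A : Alg S, A.Models V → A.Models W → Subsingleton A.carrier)
    (h3perm : ∀ α β : Congruence (FreeAlg U), ThreePerm α.rel β.rel) :
    ∃ u v : Term S ℕ, IsSwitchPair V W u v := by
  obtain ⟨v, ⟨u, hu, huv⟩, hv⟩ := (threePerm_conseq hVU hWU h3perm).relComp_of_reflTransGen
    (Conseq.equivalence V) (Conseq.equivalence W) (reflTransGen_conseq_var_zero_one htriv)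
  exact ⟨u, v, hu, huv, hv⟩

end SwitchTerms

section MaltsevProduct

variable {S : Signature}

def prodIdents (V W : Set (Ident S)) : Set (Ident S) :=
  {e | ∃ (t s : Term S ℕ) (σ : ℕ → Term S ℕ),
    Conseq V t s ∧ (∀ i j, Conseq W (σ i) (σ j)) ∧ e = (t.bind σ, s.bind σ)}

theorem InMaltsev.models_prodIdents {V W : Set (Ident S)}
    (hWidem : ∀ A : Alg S, A.Models W → ∀ a : A.carrier, A.IsIdem a) {A : Alg S}
    (hA : InMaltsev V W A) : A.Models (prodIdents V W) := by
  obtain ⟨θ, hθW, hθV⟩ := hA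
  rintro _ ⟨t, s, σ, hts, hσ, rfl⟩ env
  set c : ℕ → A.carrier := fun n => (σ n).eval A env
  have hsub : A.IsSubuniverse {b | θ.rel (c 0) b} := θ.isSubuniverse_class_s15 (hWidem _ hθW _)
  simpa only [Term.eval_bind] using Alg.eval_eq_of_subAlg_models (hθV (c 0) hsub) hts
    fun n => θ.rel_eval_of_conseq hθW (hσ 0 n) env

def IsCoherent (W : Set (Ident S)) (A : Alg S) (c : ℕ → A.carrier) : Prop :=
  ∃ (σ : ℕ → Term S ℕ) (env : ℕ → A.carrier),
    (∀ i j, Conseq W (σ i) (σ j)) ∧ c = fun n => (σ n).eval A env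

theorem Alg.Models.eval_eq_of_isCoherent {V W : Set (Ident S)} {A : Alg S}
    (hA : A.Models (prodIdents V W)) {t s : Term S ℕ} (hts : Conseq V t s) {c : ℕ → A.carrier}
    (hc : IsCoherent W A c) : t.eval A c = s.eval A c := by
  obtain ⟨σ, env, hσ, rfl⟩ := hc
  simpa only [Term.eval_bind] using hA _ ⟨t, s, σ, hts, hσ, rfl⟩ env

namespace IsCoherent

variable {W : Set (Ident S)} {A : Alg S}

theorem const (a : A.carrier) : IsCoherent W A fun _ => a :=
  ⟨fun _ => .var 0, fun _ => a, fun _ _ => .refl W _, rfl⟩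

theorem comp {c : ℕ → A.carrier} (hc : IsCoherent W A c) (f : ℕ → ℕ) :
    IsCoherent W A (c ∘ f) := by
  obtain ⟨σ, env, hσ, rfl⟩ := hc
  exact ⟨σ ∘ f, env, fun i j => hσ (f i) (f j), rfl⟩

end IsCoherent

def identRel (W : Set (Ident S)) (A : Alg S) (a b : A.carrier) : Prop :=
  ∃ (p q : Term S ℕ) (env : ℕ → A.carrier), Conseq W p q ∧ p.eval A env = a ∧ q.eval A env = b

namespace identRel

variable {W : Set (Ident S)} {A : Alg S}

protected theorem refl (a : A.carrier) : identRel W A a a :=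
  ⟨.var 0, .var 0, fun _ => a, .refl W _, rfl, rfl⟩

protected theorem symm {a b : A.carrier} (h : identRel W A a b) : identRel W A b a :=
  let ⟨p, q, env, hpq, hp, hq⟩ := h
  ⟨q, p, env, hpq.symm, hq, hp⟩

theorem op {ω : S.symbols} {a b : Fin (S.arity ω) → A.carrier}
    (h : ∀ i, identRel W A (a i) (b i)) : identRel W A (A.op ω a) (A.op ω b) := by
  choose p q e hpq hp hq using h
  obtain ⟨ρ, env, hρ⟩ := A.exists_env_comp_eq e
  refine ⟨.app ω fun i => (p i).bind fun n => .var (ρ i n),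
    .app ω fun i => (q i).bind fun n => .var (ρ i n), env,
    Conseq.app fun i => (hpq i).bind fun _ => .refl W _, ?_, ?_⟩
  · simp only [Term.eval, Term.eval_bind_var, hρ, hp]
  · simp only [Term.eval, Term.eval_bind_var, hρ, hq]

end identRel

theorem IsCoherent.identRel_apply {W : Set (Ident S)} {A : Alg S} {c : ℕ → A.carrier}
    (hc : IsCoherent W A c) (i j : ℕ) : identRel W A (c i) (c j) := by
  obtain ⟨σ, env, hσ, rfl⟩ := hc
  exact ⟨σ i, σ j, env, hσ i j, rfl, rfl⟩

def pairAssign {α : Type} (a b : α) : ℕ → α :=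
  fun n => if n = 1 then b else a

theorem Term.eval_pairAssign (A : Alg S) (env : ℕ → A.carrier) (p q : Term S ℕ) :
    (fun n => (pairAssign p q n).eval A env) = pairAssign (p.eval A env) (q.eval A env) := by
  funext n
  simp only [pairAssign, apply_ite (Term.eval A env)]

theorem Conseq.pairAssign {E : Set (Ident S)} {p p' q q' : Term S ℕ} (hp : Conseq E p p')
    (hq : Conseq E q q') (n : ℕ) : Conseq E (pairAssign p q n) (pairAssign p' q' n) := by
  unfold _root_.pairAssign
  split_ifs
  exacts [hq, hp]

theorem identRel.isCoherent_pairAssign {W : Set (Ident S)} {A : Alg S} {a b : A.carrier}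
    (h : identRel W A a b) : IsCoherent W A (pairAssign a b) := by
  obtain ⟨p, q, env, hpq, rfl, rfl⟩ := h
  have hp (n : ℕ) : Conseq W (pairAssign p q n) p := by
    unfold pairAssign
    split_ifs
    exacts [hpq.symm, .refl W p]
  exact ⟨pairAssign p q, env, fun i j => (hp i).trans (hp j).symm,
    (Term.eval_pairAssign A env p q).symm⟩

theorem IsCoherent.switch {W : Set (Ident S)} {A : Alg S} {u v : Term S ℕ} (hw : Conseq W u v)
    {d : ℕ → A.carrier} (hd : IsCoherent W A d) (k m : ℕ) {y : A.carrier}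
    (hy : identRel W A (d k) y) :
    IsCoherent W A fun i =>
      if i = m then v.eval A (pairAssign (d k) y) else u.eval A (pairAssign (d i) (d k)) := by
  obtain ⟨σ, env, hσ, rfl⟩ := hd
  obtain ⟨p, q, f, hpq, hp, rfl⟩ := hy
  obtain ⟨ρ, env', hρ⟩ := A.exists_env_comp_eq ![env, f]
  set σ' : ℕ → Term S ℕ := fun i => (σ i).bind fun n => .var (ρ 0 n)
  set p' := p.bind fun n => .var (ρ 1 n)
  set q' := q.bind fun n => .var (ρ 1 n)
  have hσ' (i : ℕ) : (σ' i).eval A env' = (σ i).eval A env := by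
    simp [σ', Term.eval_bind_var, hρ]
  have hp' : p'.eval A env' = (σ k).eval A env := by simp [p', Term.eval_bind_var, hρ, hp]
  have hq' : q'.eval A env' = q.eval A f := by simp [q', Term.eval_bind_var, hρ]
  have hW (i : ℕ) : Conseq W
      (if i = m then v.bind (pairAssign (σ' k) q') else u.bind (pairAssign (σ' i) p'))
      (u.bind (pairAssign (σ' k) p')) := by
    split_ifs
    · exact hw.symm.bind (Conseq.pairAssign (.refl W _) (hpq.bind fun _ => .refl W _).symm)
    · exact (Conseq.refl W u).bind
        (Conseq.pairAssign ((hσ i k).bind fun _ => .refl W _) (.refl W _))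
  refine ⟨_, env', fun i j => (hW i).trans (hW j).symm, funext fun i => ?_⟩
  split_ifs <;> simp only [Term.eval_bind, Term.eval_pairAssign, hσ', hp', hq']

theorem IsCoherent.update_of_identRel {V W : Set (Ident S)} {A : Alg S}
    (hA : A.Models (prodIdents V W)) {u v : Term S ℕ} (huv : IsSwitchPair V W u v)
    {d : ℕ → A.carrier} (hd : IsCoherent W A d)
    {k : ℕ} {y : A.carrier} (hy : identRel W A (d k) y) (m : ℕ) :
    IsCoherent W A (update d m y) := by
  convert hd.switch huv.mid k m hy using 1
  funext i
  rcases eq_or_ne i m with rfl | hi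
  · rw [update_self, if_pos rfl, hA.eval_eq_of_isCoherent huv.right hy.isCoherent_pairAssign]
    simp [Term.eval, pairAssign]
  · rw [update_of_ne hi, if_neg hi,
      ← hA.eval_eq_of_isCoherent huv.left (hd.identRel_apply i k).isCoherent_pairAssign]
    simp [Term.eval, pairAssign]

theorem IsCoherent.update_of_reflTransGen {V W : Set (Ident S)} {A : Alg S}
    (hA : A.Models (prodIdents V W)) {u v : Term S ℕ} (huv : IsSwitchPair V W u v)
    {d : ℕ → A.carrier} (hd : IsCoherent W A d)
    {k : ℕ} {y : A.carrier} (hy : ReflTransGen (identRel W A) (d k) y) (m : ℕ) :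
    IsCoherent W A (update d m y) := by
  induction hy with
  | refl => simpa [comp_update] using hd.comp (update id m k)
  | tail _ hzy ih =>
    simpa using ih.update_of_identRel hA huv (k := m) (by simpa using hzy) m

theorem isCoherent_ite_lt {V W : Set (Ident S)} {A : Alg S}
    (hA : A.Models (prodIdents V W)) {u v : Term S ℕ} (huv : IsSwitchPair V W u v)
    {a : A.carrier} {c : ℕ → A.carrier}
    (hc : ∀ i, ReflTransGen (identRel W A) a (c i)) (N : ℕ) :
    IsCoherent W A fun i => if i < N then c i else a := by
  induction N with
  | zero => simpa using IsCoherent.const a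
  | succ N ih =>
    convert ih.update_of_reflTransGen hA huv (k := N) (by simpa using hc N) N using 1
    funext i
    rcases lt_trichotomy i N with h | rfl | h
    · simp [h, h.trans (Nat.lt_succ_self N), h.ne]
    · simp
    · simp [h.ne', h.not_gt, h.not_ge]

def identCong (W : Set (Ident S)) (A : Alg S) : Congruence A :=
  Congruence.ofReflTransGen (identRel W A) (fun _ _ => identRel.symm) fun _ a j _ _ h =>
    identRel.op fun i => by
      rcases eq_or_ne i j with rfl | hij
      · simpa using h
      · simpa [update_of_ne hij] using identRel.refl (a i)

theorem inMaltsev_of_models_prodIdents {V W : Set (Ident S)} {A : Alg S}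
    (hA : A.Models (prodIdents V W)) {u v : Term S ℕ} (huv : IsSwitchPair V W u v) :
    InMaltsev V W A := by
  refine ⟨identCong W A, (identCong W A).models_quot_of fun e he env =>
    .single ⟨e.1, e.2, env, .of_mem he, rfl, rfl⟩, fun a hsub e he env => Subtype.ext ?_⟩
  set c : ℕ → A.carrier := fun n => (env n).1
  set N := max e.1.varBound e.2.varBound
  have hcN (t : Term S ℕ) (ht : t.varBound ≤ N) :
      t.eval A c = t.eval A fun i => if i < N then c i else a :=
    t.eval_congr A fun n hn => (if_pos (hn.trans_le ht)).symm
  refine (Alg.subAlg_eval A hsub _ env e.1).trans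
    (Eq.trans ?_ (Alg.subAlg_eval A hsub _ env e.2).symm)
  rw [hcN _ (le_max_left ..), hcN _ (le_max_right ..)]
  exact hA.eval_eq_of_isCoherent (.of_mem he)
    (isCoherent_ite_lt hA huv (fun n => (env n).2) N)

end MaltsevProduct

theorem stmt_15_general (S : Signature)
    (U V W : Set (Ident S))
    (hVU : ∀ A : Alg S, A.Models V → A.Models U)
    (hWU : ∀ A : Alg S, A.Models W → A.Models U)
    (hWidem : ∀ A : Alg S, A.Models W → ∀ a : A.carrier, A.IsIdem a)
    (htriv : ∀ A : Alg S, A.Models V → A.Models W → Subsingleton A.carrier)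
    (h3perm : ∀ A : Alg S, A.Models U →
      ∀ α β : Congruence A, ThreePerm α.rel β.rel) :
    IsVarietyClass (InMaltsev V W) := by
  obtain ⟨u, v, huv⟩ := exists_isSwitchPair hVU hWU htriv
    (h3perm _ (models_termAlg_quot _ fun _ _ => id))
  exact ⟨prodIdents V W, fun A => ⟨InMaltsev.models_prodIdents hWidem,
    fun hA => inMaltsev_of_models_prodIdents hA huv⟩⟩

/-- Let `V` and `W` be subvarieties of a variety `U`, with `W`
idempotent. If `V ∩ W` is the trivial variety and `U` is congruence
`3`-permutable, then the Mal'tsev product `V ∘ W` is a variety. -/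
theorem stmt_15 (S : Signature) (h0 : ∀ ω : S.symbols, 0 < S.arity ω)
    (U V W : Set (Ident S))
    (hVU : ∀ A : Alg S, A.Models V → A.Models U)
    (hWU : ∀ A : Alg S, A.Models W → A.Models U)
    (hWidem : ∀ A : Alg S, A.Models W → ∀ a : A.carrier, A.IsIdem a)
    (htriv : ∀ A : Alg S, A.Models V → A.Models W → Subsingleton A.carrier)
    (h3perm : ∀ A : Alg S, A.Models U →
      ∀ α β : Congruence A, ThreePerm α.rel β.rel) :
    IsVarietyClass (InMaltsev V W) :=
  stmt_15_general S U V W hVU hWU hWidem htriv h3perm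
end
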